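/- arXiv:2006.02970 — 2 statements merged into one kernel-verified Lean document; each statement's English description precedes it below -/
import Mathlib

section
/- Let p be an odd prime, s, n positive integers, G = ℤ/2pnℤ, and b ∈ G. Then N_D(b) = (1/(2pn)) · ∑_χ χ(b)^{−1} ∏_{k=1}^{(p−1)/2} (1 − χ(k)^{−o(χ)/p})^{2spn/o(χ)}, where the sum runs over all characters χ of G whose order o(χ) is divisible by p. -/
open Finset

/-- The set `D ⊆ ℤ/2pnℤ`, image of `{pj - k : -(n-1) ≤ j ≤ n, 1 ≤ k ≤ (p-1)/2}`. -/
noncomputable def Dset (p n : ℕ) : Finset (ZMod (2 * p * n)) :=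
  Finset.image (fun jk : ℤ × ℕ => (((p : ℤ) * jk.1 - jk.2 : ℤ) : ZMod (2 * p * n)))
    ((Finset.Icc (1 - (n : ℤ)) (n : ℤ)) ×ˢ Finset.Icc 1 ((p - 1) / 2))

/-- `N_D(m_1, …, m_s, b)`: the number of `s`-tuples `(V_1, …, V_s)` of subsets of `D`
with `|V_i| = m_i` for each `i` and `∑_i ∑_{x ∈ V_i} x = b` in `ℤ/2pnℤ`. -/
noncomputable def NDtuples (p s n : ℕ) (m : Fin s → ℕ) (b : ZMod (2 * p * n)) : ℕ :=
  Nat.card {V : Fin s → Finset (ZMod (2 * p * n)) //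
    (∀ i, V i ⊆ Dset p n ∧ (V i).card = m i) ∧ (∑ i, ∑ x ∈ V i, x) = b}

/-- `N_D(b) = ∑_{0 ≤ m_1, …, m_s ≤ n(p-1)} (-1)^{m_1 + ⋯ + m_s} N_D(m_1, …, m_s, b)`. -/
noncomputable def ND (p s n : ℕ) (b : ZMod (2 * p * n)) : ℤ :=
  ∑ m ∈ Fintype.piFinset (fun _ : Fin s => Finset.range (n * (p - 1) + 1)),
    (-1 : ℤ) ^ (∑ i, m i) * NDtuples p s n m b

/-! ### Auxiliary lemmas -/

private lemma addChar_map_sum {A M : Type*} [AddCommMonoid A] [CommMonoid M]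
    (χ : AddChar A M) {ι : Type*} (W : Finset ι) (f : ι → A) :
    χ (∑ x ∈ W, f x) = ∏ x ∈ W, χ (f x) := by
  classical
  induction W using Finset.cons_induction with
  | empty => simp
  | cons a s ha ih => simp [ha, AddChar.map_add_eq_mul, ih]

private lemma prod_one_sub_mul_pow {d : ℕ} (hd : 0 < d) {ω : ℂ}
    (hω : IsPrimitiveRoot ω d) (c : ℂ) :
    ∏ r ∈ Finset.range d, (1 - c * ω ^ r) = 1 - c ^ d := by
  have h := hω.pow_sub_pow_eq_prod_sub_mul (x := (1:ℂ)) (y := c) hd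
  rw [one_pow] at h
  rw [h]
  refine Finset.prod_nbij (fun r => ω ^ r) (fun r hr => ?_) (fun r hr r' hr' hrr' => ?_)
    (fun μ hμ => ?_) (fun r hr => by ring)
  · exact (Polynomial.mem_nthRootsFinset hd (1:ℂ)).2
      (by rw [← pow_mul, mul_comm, pow_mul, hω.pow_eq_one, one_pow])
  · exact hω.pow_inj (Finset.mem_range.1 (by simpa using hr))
      (Finset.mem_range.1 (by simpa using hr')) hrr'
  · haveI : NeZero d := ⟨hd.ne'⟩
    obtain ⟨i, hi, rfl⟩ := hω.eq_pow_of_pow_eq_one ((Polynomial.mem_nthRootsFinset hd (1:ℂ)).1 hμ)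
    exact ⟨i, by simpa using hi, rfl⟩

private lemma prod_range_mul_pow (c ω : ℂ) {d : ℕ} (hω : ω ^ d = 1) (m : ℕ) :
    ∏ t ∈ Finset.range (m * d), (1 - c * ω ^ t)
      = (∏ t ∈ Finset.range d, (1 - c * ω ^ t)) ^ m := by
  induction m with
  | zero => simp
  | succ m ih =>
    rw [Nat.succ_mul, Finset.prod_range_add, ih, pow_succ]
    congr 1
    refine Finset.prod_congr rfl fun t _ => ?_
    rw [pow_add, pow_mul', hω, one_pow, one_mul]

private lemma prod_int_Icc_eq_prod_range (g : ℤ → ℂ) (a : ℤ) (m : ℕ) :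
    ∏ j ∈ Finset.Icc a (a + m - 1), g j = ∏ t ∈ Finset.range m, g (a + t) := by
  refine Finset.prod_nbij' (i := fun j => (j - a).toNat) (j := fun t => a + t)
    ?_ ?_ ?_ ?_ ?_
  · intro x hx; simp only [Finset.mem_Icc] at hx; simp only [Finset.mem_range]; omega
  · intro x hx; simp only [Finset.mem_range] at hx; simp only [Finset.mem_Icc]; omega
  · intro x hx; simp only [Finset.mem_Icc] at hx; omega
  · intro x hx; simp only [Finset.mem_range] at hx; omega
  · intro x hx; simp only [Finset.mem_Icc] at hx
    congr 1; omega

private lemma chi_int {N : ℕ} [NeZero N] (χ : AddChar (ZMod N) ℂ) (m : ℤ) :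
    χ ((m : ZMod N)) = χ 1 ^ m := by
  have h : ((m : ZMod N)) = m • (1 : ZMod N) := by simp
  rw [h, AddChar.map_zsmul_eq_zpow]

private lemma orderOf_addChar {N : ℕ} [NeZero N] (χ : AddChar (ZMod N) ℂ) :
    orderOf χ = orderOf (χ 1) := by
  rw [orderOf_eq_orderOf_iff]
  intro k
  constructor
  · intro h
    have := congrArg (fun ψ : AddChar (ZMod N) ℂ => ψ 1) h
    simpa using this
  · intro h
    ext a
    obtain ⟨v, rfl⟩ := (ZMod.natCast_rightInverse (n := N)).surjective a
    have h1 : ((v : ZMod N)) = v • (1 : ZMod N) := by simp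
    rw [AddChar.pow_apply, h1, AddChar.map_nsmul_eq_pow, AddChar.one_apply,
      ← pow_mul, mul_comm, pow_mul, h, one_pow]

private lemma zeta_facts {p n : ℕ} (hp : p.Prime) (hn : 1 ≤ n)
    (χ : AddChar (ZMod (2 * p * n)) ℂ) :
    haveI : NeZero (2 * p * n) :=
      ⟨Nat.mul_ne_zero (Nat.mul_ne_zero two_ne_zero hp.pos.ne') (Nat.one_le_iff_ne_zero.mp hn)⟩
    (χ 1) ^ (2 * p * n) = 1 ∧ (χ 1) ≠ 0 ∧ orderOf (χ 1) ∣ 2 * p * n ∧ 0 < orderOf (χ 1) := by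
  haveI : NeZero (2 * p * n) :=
    ⟨Nat.mul_ne_zero (Nat.mul_ne_zero two_ne_zero hp.pos.ne') (Nat.one_le_iff_ne_zero.mp hn)⟩
  have hN : 0 < 2 * p * n := Nat.pos_of_ne_zero (NeZero.ne _)
  have h1 : (χ 1) ^ (2 * p * n) = 1 := by
    rw [← AddChar.map_nsmul_eq_pow]
    have : (2 * p * n) • (1 : ZMod (2 * p * n)) = 0 := by
      simp [nsmul_eq_mul, ZMod.natCast_self]
    rw [this, AddChar.map_zero_eq_one]
  have h0 : (χ 1) ≠ 0 := by
    intro h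
    rw [h, zero_pow hN.ne'] at h1
    exact zero_ne_one h1
  exact ⟨h1, h0, orderOf_dvd_of_pow_eq_one h1,
    (isOfFinOrder_iff_pow_eq_one.mpr ⟨_, hN, h1⟩).orderOf_pos⟩

private lemma Dmap_injOn {p n : ℕ} (hp : p.Prime) (hn : 1 ≤ n) :
    Set.InjOn (fun jk : ℤ × ℕ => (((p : ℤ) * jk.1 - jk.2 : ℤ) : ZMod (2 * p * n)))
      ((Finset.Icc (1 - (n : ℤ)) (n : ℤ)) ×ˢ Finset.Icc 1 ((p - 1) / 2)) := by
  rintro ⟨j1, k1⟩ h1 ⟨j2, k2⟩ h2 h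
  simp only [Finset.coe_product, Set.mem_prod, Finset.mem_coe, Finset.mem_Icc] at h1 h2
  simp only at h
  rw [ZMod.intCast_eq_intCast_iff, Int.ModEq] at h
  have hdvd : ((2 * p * n : ℕ) : ℤ) ∣ (((p:ℤ) * j2 - (k2:ℤ)) - ((p:ℤ) * j1 - (k1:ℤ))) :=
    Int.ModEq.dvd h
  have hp0 : (0:ℤ) < (p:ℤ) := by exact_mod_cast hp.pos
  have hpk : (p:ℤ) ∣ ((k1:ℤ) - (k2:ℤ)) := by
    have h1 : (p:ℤ) ∣ ((2 * p * n : ℕ) : ℤ) := by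
      push_cast; exact ⟨2 * n, by ring⟩
    have h2 := h1.trans hdvd
    have h3 : (p:ℤ) ∣ (p:ℤ) * j2 - (p:ℤ) * j1 := ⟨j2 - j1, by ring⟩
    have : ((p:ℤ) * j2 - (k2:ℤ)) - ((p:ℤ) * j1 - (k1:ℤ))
        = ((p:ℤ) * j2 - (p:ℤ) * j1) + ((k1:ℤ) - (k2:ℤ)) := by ring
    rw [this] at h2
    exact (dvd_add_right h3).mp h2
  have hkb : ((p:ℕ) - 1) / 2 < p := by omega
  have hk : k1 = k2 := by
    have habs : |((k1:ℤ) - (k2:ℤ))| < (p:ℤ) := by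
      rw [abs_sub_lt_iff]
      constructor <;> [skip; skip] <;>
      · have := h1.2.1; have := h1.2.2; have := h2.2.1; have := h2.2.2
        have : ((p:ℕ) - 1) / 2 < p := hkb
        push_cast at *
        omega
    have := Int.eq_zero_of_abs_lt_dvd hpk habs
    omega
  subst hk
  have hj : j1 = j2 := by
    have hdvd2 : ((2 * n : ℕ) : ℤ) ∣ (j2 - j1) := by
      have : ((2 * p * n : ℕ) : ℤ) ∣ (p:ℤ) * (j2 - j1) := by
        have heq : ((p:ℤ) * j2 - (k1:ℤ)) - ((p:ℤ) * j1 - (k1:ℤ)) = (p:ℤ) * (j2 - j1) := by ring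
        rwa [heq] at hdvd
      have hfac : ((2 * p * n : ℕ) : ℤ) = (p:ℤ) * ((2 * n : ℕ) : ℤ) := by push_cast; ring
      rw [hfac] at this
      exact (mul_dvd_mul_iff_left hp0.ne').mp this
    have habs : |j2 - j1| < ((2 * n : ℕ) : ℤ) := by
      rw [abs_sub_lt_iff]
      have := h1.1.1; have := h1.1.2; have := h2.1.1; have := h2.1.2
      push_cast at *
      omega
    have := Int.eq_zero_of_abs_lt_dvd hdvd2 habs
    omega
  simp [hj]

private lemma Dset_card_le {p n : ℕ} (hodd : Odd p) :
    (Dset p n).card ≤ n * (p - 1) := by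
  apply le_trans (Finset.card_image_le)
  rw [Finset.card_product, Int.card_Icc, Nat.card_Icc]
  have h2 : ((n:ℤ) + 1 - (1 - (n:ℤ))).toNat = 2 * n := by omega
  have h3 : (p - 1) / 2 + 1 - 1 = (p-1)/2 := by omega
  rw [h2, h3]
  obtain ⟨t, ht⟩ := hodd
  have : p - 1 = 2 * t := by omega
  rw [this]
  simp only [Nat.mul_div_cancel_left _ (by norm_num : 0 < 2)]
  ring_nf
  omega

private lemma Pchi_zero {p n : ℕ} (hp : p.Prime) (hodd : Odd p) (hn : 1 ≤ n)
    (χ : AddChar (ZMod (2 * p * n)) ℂ) (hnd : ¬ p ∣ orderOf χ) :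
    ∏ x ∈ Dset p n, (1 - χ x) = 0 := by
  haveI : NeZero (2 * p * n) :=
    ⟨Nat.mul_ne_zero (Nat.mul_ne_zero two_ne_zero hp.pos.ne') (Nat.one_le_iff_ne_zero.mp hn)⟩
  obtain ⟨hζN, hζ0, he, hepos⟩ := zeta_facts hp hn χ
  set ζ := χ 1 with hζ
  set e := orderOf ζ with he'
  rw [orderOf_addChar] at hnd
  have hcop : Nat.Coprime e p := (Nat.coprime_comm.mp ((hp.coprime_iff_not_dvd).mpr hnd))
  have he2n : e ∣ 2 * n := by
    refine hcop.dvd_of_dvd_mul_right ?_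
    have : 2 * n * p = 2 * p * n := by ring
    rw [this]; exact he
  have hic : IsCoprime (p : ℤ) (e : ℤ) := by
    rw [Int.isCoprime_iff_gcd_eq_one]
    simpa using (hcop.symm)
  obtain ⟨u, v, huv⟩ := hic
  set r : ℤ := (u - (1 - (n : ℤ))) % e with hr
  have hepos' : (0 : ℤ) < e := by exact_mod_cast hepos
  have hr0 : 0 ≤ r := Int.emod_nonneg _ hepos'.ne'
  have hre : r < e := Int.emod_lt_of_pos _ hepos'
  set j : ℤ := (1 - (n : ℤ)) + r with hj
  have he2n' : (e : ℤ) ≤ 2 * n := by exact_mod_cast Nat.le_of_dvd (by omega) he2n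
  have hjmem : j ∈ Finset.Icc (1 - (n : ℤ)) (n : ℤ) := by
    simp only [Finset.mem_Icc]; omega
  have hdvd_ju : (e : ℤ) ∣ j - u := by
    have : (u - (1 - (n : ℤ))) - r = (e : ℤ) * ((u - (1 - (n : ℤ))) / e) := by
      rw [hr, Int.emod_def]; ring
    exact ⟨-((u - (1 - (n : ℤ))) / e), by rw [hj]; linear_combination -this⟩
  have hdvd_pu : (e : ℤ) ∣ (p : ℤ) * u - 1 := ⟨-v, by linear_combination huv⟩
  have hjmod : (e : ℤ) ∣ (p : ℤ) * j - 1 := by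
    have : (p : ℤ) * j - 1 = (p : ℤ) * (j - u) + ((p : ℤ) * u - 1) := by ring
    rw [this]
    exact dvd_add (Dvd.dvd.mul_left hdvd_ju _) hdvd_pu
  have hp3 : 3 ≤ p := by
    have h2 := hp.two_le
    have hne : p ≠ 2 := by rintro rfl; exact (by decide : ¬ Odd 2) hodd
    omega
  have hk1 : (1 : ℕ) ∈ Finset.Icc 1 ((p - 1) / 2) := by
    simp only [Finset.mem_Icc]; omega
  have hxmem : (((p : ℤ) * j - (1 : ℕ) : ℤ) : ZMod (2 * p * n)) ∈ Dset p n := by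
    rw [Dset]
    exact Finset.mem_image.mpr ⟨(j, 1), Finset.mem_product.mpr ⟨hjmem, hk1⟩, rfl⟩
  refine Finset.prod_eq_zero hxmem ?_
  rw [chi_int]
  obtain ⟨q, hq⟩ := hjmod
  have : ((p : ℤ) * j - ((1 : ℕ) : ℤ)) = (e : ℤ) * q := by exact_mod_cast hq
  rw [this, zpow_mul, zpow_natCast, pow_orderOf_eq_one, one_zpow, sub_self]

private lemma Pchi_eq {p n : ℕ} (hp : p.Prime) (hodd : Odd p) (hn : 1 ≤ n)
    (χ : AddChar (ZMod (2 * p * n)) ℂ) (hdvd : p ∣ orderOf χ) :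
    ∏ x ∈ Dset p n, (1 - χ x) =
      ∏ k ∈ Finset.Icc 1 ((p - 1) / 2),
        (1 - (χ ((k : ℕ) : ZMod (2 * p * n)))⁻¹ ^ (orderOf χ / p)) ^
          (2 * n / (orderOf χ / p)) := by
  haveI : NeZero (2 * p * n) :=
    ⟨Nat.mul_ne_zero (Nat.mul_ne_zero two_ne_zero hp.pos.ne') (Nat.one_le_iff_ne_zero.mp hn)⟩
  obtain ⟨hζN, hζ0, he, hepos⟩ := zeta_facts hp hn χ
  rw [orderOf_addChar χ] at hdvd ⊢
  set ζ := χ 1 with hζ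
  set e := orderOf ζ with he'
  set d := e / p with hd'
  have hde : e = p * d := (Nat.mul_div_cancel' hdvd).symm
  have hdpos : 0 < d := by
    rcases Nat.eq_zero_or_pos d with h | h
    · rw [h, mul_zero] at hde; omega
    · exact h
  have hd2n : d ∣ 2 * n := by
    have h1 : p * d ∣ p * (2 * n) := by
      rw [← hde, show p * (2 * n) = 2 * p * n by ring]; exact he
    exact (mul_dvd_mul_iff_left (by exact_mod_cast hp.pos.ne' : p ≠ 0)).mp h1
  set ω := ζ ^ p with hω'
  have hωord : orderOf ω = d := by
    rw [hω', orderOf_pow' _ hp.pos.ne', Nat.gcd_eq_right hdvd]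
  have hωprim : IsPrimitiveRoot ω d := hωord ▸ IsPrimitiveRoot.orderOf ω
  have hωd : ω ^ d = 1 := by rw [← hωord]; exact pow_orderOf_eq_one ω
  have hζe : ζ ^ e = 1 := pow_orderOf_eq_one ζ
  rw [Dset, Finset.prod_image
    (fun x hx y hy hxy => Dmap_injOn hp hn
      (Set.mem_prod.mpr ⟨Finset.mem_coe.mpr (Finset.mem_product.mp hx).1,
        Finset.mem_coe.mpr (Finset.mem_product.mp hx).2⟩)
      (Set.mem_prod.mpr ⟨Finset.mem_coe.mpr (Finset.mem_product.mp hy).1,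
        Finset.mem_coe.mpr (Finset.mem_product.mp hy).2⟩) hxy)]
  rw [Finset.prod_product, Finset.prod_comm]
  refine Finset.prod_congr rfl fun k hk => ?_
  have hIcc : Finset.Icc (1 - (n : ℤ)) (n : ℤ)
      = Finset.Icc (1 - (n : ℤ)) ((1 - (n : ℤ)) + (2 * n : ℕ) - 1) := by
    congr 1; push_cast; ring
  rw [hIcc, prod_int_Icc_eq_prod_range]
  have hstep : ∀ t : ℕ,
      χ ((((p : ℤ) * ((1 - (n : ℤ)) + t) - k : ℤ)) : ZMod (2 * p * n))
        = (ζ ^ ((p : ℤ) * (1 - (n : ℤ)) - k)) * ω ^ t := by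
    intro t
    rw [chi_int, show (p : ℤ) * ((1 - (n : ℤ)) + t) - k
        = ((p : ℤ) * (1 - (n : ℤ)) - k) + ((p * t : ℕ) : ℤ) by push_cast; ring]
    rw [zpow_add₀ hζ0, zpow_natCast, pow_mul]
  simp only [hstep]
  set c := ζ ^ ((p : ℤ) * (1 - (n : ℤ)) - k) with hc
  rw [show Finset.range (2 * n) = Finset.range ((2 * n / d) * d) by
    rw [Nat.div_mul_cancel hd2n]]
  rw [prod_range_mul_pow c ω hωd, prod_one_sub_mul_pow hdpos hωprim]
  have hck : c ^ d = (χ ((k : ℕ) : ZMod (2 * p * n)))⁻¹ ^ d := by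
    have hk' : ((k : ℕ) : ZMod (2 * p * n)) = (((k : ℕ) : ℤ) : ZMod (2 * p * n)) := by
      push_cast; rfl
    rw [hk', chi_int, ← hζ, hc]
    rw [← zpow_natCast (ζ ^ ((p : ℤ) * (1 - (n : ℤ)) - k)) d, ← zpow_mul]
    rw [← zpow_neg, ← zpow_natCast (ζ ^ (-((k : ℕ) : ℤ))) d, ← zpow_mul]
    rw [show ((p : ℤ) * (1 - (n : ℤ)) - k) * d = (e : ℤ) * (1 - (n : ℤ)) + (-((k : ℕ) : ℤ) * d) by
      push_cast [hde]; ring]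
    rw [zpow_add₀ hζ0, zpow_mul, zpow_natCast, hζe, one_zpow, one_mul]
  rw [hck]

private lemma sum_powerset_eq {N : ℕ} (D : Finset (ZMod N)) (χ : AddChar (ZMod N) ℂ) :
    ∑ W ∈ D.powerset, (-1 : ℂ) ^ W.card * χ (∑ x ∈ W, x) = ∏ x ∈ D, (1 - χ x) := by
  have h := Finset.prod_add (fun x => -χ x) (fun _ => (1 : ℂ)) D
  simp only [Finset.prod_const_one, mul_one] at h
  have h2 : ∏ x ∈ D, (1 - χ x) = ∏ x ∈ D, (-χ x + 1) := by
    refine Finset.prod_congr rfl fun x _ => by ring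
  rw [h2, h]
  refine Finset.sum_congr rfl fun W hW => ?_
  rw [addChar_map_sum]
  rw [show ∏ x ∈ W, -χ x = ∏ x ∈ W, (-1 : ℂ) * χ x from Finset.prod_congr rfl fun x _ => by ring]
  rw [Finset.prod_mul_distrib, Finset.prod_const]

private lemma sum_tuples_eq {N s : ℕ} (D : Finset (ZMod N)) (χ : AddChar (ZMod N) ℂ) :
    ∑ V ∈ Fintype.piFinset (fun _ : Fin s => D.powerset),
      (-1 : ℂ) ^ (∑ i, (V i).card) * χ (∑ i, ∑ x ∈ V i, x)
      = (∏ x ∈ D, (1 - χ x)) ^ s := by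
  have key : ∀ V : Fin s → Finset (ZMod N),
      (-1 : ℂ) ^ (∑ i, (V i).card) * χ (∑ i, ∑ x ∈ V i, x)
        = ∏ i, ((-1 : ℂ) ^ (V i).card * χ (∑ x ∈ V i, x)) := by
    intro V
    rw [addChar_map_sum χ Finset.univ (fun i => ∑ x ∈ V i, x), ← Finset.prod_pow_eq_pow_sum,
      Finset.prod_mul_distrib]
  simp only [key]
  rw [← Finset.prod_univ_sum (t := fun _ : Fin s => D.powerset)
    (f := fun _ W => (-1 : ℂ) ^ W.card * χ (∑ x ∈ W, x))]
  simp only [sum_powerset_eq]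
  rw [Finset.prod_const, Finset.card_univ, Fintype.card_fin]

private lemma ND_eq_signed_sum {p s n : ℕ} (hp : p.Prime) (hodd : Odd p) (hn : 1 ≤ n)
    (b : ZMod (2 * p * n)) :
    (ND p s n b : ℂ) =
      ∑ V ∈ Fintype.piFinset (fun _ : Fin s => (Dset p n).powerset),
        (if (∑ i, ∑ x ∈ V i, x) = b then (-1 : ℂ) ^ (∑ i, (V i).card) else 0) := by
  classical
  haveI : NeZero (2 * p * n) :=
    ⟨Nat.mul_ne_zero (Nat.mul_ne_zero two_ne_zero hp.pos.ne') (Nat.one_le_iff_ne_zero.mp hn)⟩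
  have hcard : ∀ m : Fin s → ℕ, NDtuples p s n m b =
      ((Fintype.piFinset (fun _ : Fin s => (Dset p n).powerset)).filter
        (fun V => ((fun i => (V i).card) = m) ∧ (∑ i, ∑ x ∈ V i, x) = b)).card := by
    intro m
    rw [NDtuples, Nat.card_eq_fintype_card, Fintype.card_subtype]
    congr 1
    ext V
    simp only [Finset.mem_filter, Finset.mem_univ, true_and, Fintype.mem_piFinset,
      Finset.mem_powerset, funext_iff, forall_and]
    tauto
  have hmaps : ∀ V ∈ Fintype.piFinset (fun _ : Fin s => (Dset p n).powerset),
      (fun i => (V i).card) ∈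
        Fintype.piFinset (fun _ : Fin s => Finset.range (n * (p - 1) + 1)) := by
    intro V hV
    simp only [Fintype.mem_piFinset, Finset.mem_range] at hV ⊢
    intro i
    have := Finset.card_le_card (Finset.mem_powerset.mp (hV i))
    have := Dset_card_le (n := n) hodd
    omega
  rw [← Finset.sum_fiberwise_of_maps_to hmaps
    (fun V => if (∑ i, ∑ x ∈ V i, x) = b then (-1 : ℂ) ^ (∑ i, (V i).card) else 0)]
  rw [ND]
  push_cast
  refine Finset.sum_congr rfl fun m hm => ?_
  rw [hcard m, ← Finset.sum_filter, Finset.filter_filter]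
  have hconst : ∀ V ∈ (Fintype.piFinset (fun _ : Fin s => (Dset p n).powerset)).filter
      (fun V => ((fun i => (V i).card) = m) ∧ (∑ i, ∑ x ∈ V i, x) = b),
      (-1 : ℂ) ^ (∑ i, (V i).card) = (-1 : ℂ) ^ (∑ i, m i) := by
    intro V hV
    obtain ⟨-, hg, -⟩ := Finset.mem_filter.mp hV
    rw [show (∑ i, (V i).card) = ∑ i, m i from
      Finset.sum_congr rfl fun i _ => congrFun hg i]
  rw [Finset.sum_congr rfl hconst, Finset.sum_const, nsmul_eq_mul, mul_comm]

private lemma signed_sum_eq_char_sum {p s n : ℕ} [NeZero (2 * p * n)] (hp : p.Prime)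
    (hn : 1 ≤ n) (b : ZMod (2 * p * n)) :
    ∑ V ∈ Fintype.piFinset (fun _ : Fin s => (Dset p n).powerset),
      (if (∑ i, ∑ x ∈ V i, x) = b then (-1 : ℂ) ^ (∑ i, (V i).card) else 0)
    = (1 / (2 * p * n : ℂ)) *
        ∑ χ : AddChar (ZMod (2 * p * n)) ℂ, (χ b)⁻¹ * (∏ x ∈ Dset p n, (1 - χ x)) ^ s := by
  classical
  have hNc : ((2 * p * n : ℕ) : ℂ) ≠ 0 := Nat.cast_ne_zero.mpr (NeZero.ne _)
  have hNc' : (2 * (p : ℂ) * n) ≠ 0 := by push_cast at hNc; exact hNc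
  have horth : ∀ c : ZMod (2 * p * n),
      ∑ χ : AddChar (ZMod (2 * p * n)) ℂ, χ c = if c = 0 then ((2 * p * n : ℕ) : ℂ) else 0 := by
    intro c
    rw [AddChar.sum_apply_eq_ite]
    simp [ZMod.card]
  have hterm : ∀ V : Fin s → Finset (ZMod (2 * p * n)),
      (if (∑ i, ∑ x ∈ V i, x) = b then (-1 : ℂ) ^ (∑ i, (V i).card) else 0)
      = (1 / (2 * p * n : ℂ)) * ∑ χ : AddChar (ZMod (2 * p * n)) ℂ,
          (χ b)⁻¹ * ((-1 : ℂ) ^ (∑ i, (V i).card) * χ (∑ i, ∑ x ∈ V i, x)) := by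
    intro V
    have h1 : ∑ χ : AddChar (ZMod (2 * p * n)) ℂ,
        (χ b)⁻¹ * ((-1 : ℂ) ^ (∑ i, (V i).card) * χ (∑ i, ∑ x ∈ V i, x))
        = (-1 : ℂ) ^ (∑ i, (V i).card) *
            ∑ χ : AddChar (ZMod (2 * p * n)) ℂ, χ ((∑ i, ∑ x ∈ V i, x) - b) := by
      rw [Finset.mul_sum]
      refine Finset.sum_congr rfl fun χ _ => ?_
      rw [AddChar.map_sub_eq_div, div_eq_mul_inv]
      ring
    rw [h1, horth]
    simp only [sub_eq_zero]
    split_ifs with h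
    · push_cast
      field_simp
      exact (div_self (mul_ne_zero (by exact_mod_cast hp.ne_zero)
        (by exact_mod_cast (by omega : n ≠ 0)))).symm
    · rw [mul_zero, mul_zero]
  simp only [hterm]
  rw [← Finset.mul_sum]
  congr 1
  rw [Finset.sum_comm]
  refine Finset.sum_congr rfl fun χ _ => ?_
  rw [← Finset.mul_sum, sum_tuples_eq]

private lemma exp_arith {p n s e : ℕ} (hp : 0 < p) (he : 0 < e) (hpe : p ∣ e)
    (hedvd : e ∣ 2 * p * n) : 2 * n / (e / p) * s = 2 * s * p * n / e := by
  obtain ⟨d, rfl⟩ := hpe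
  rw [Nat.mul_div_cancel_left _ hp]
  have hd0 : 0 < d := by
    rcases Nat.eq_zero_or_pos d with h | h
    · subst h; simp at he
    · exact h
  have hd2n : d ∣ 2 * n := by
    have h1 : p * d ∣ p * (2 * n) := by
      rw [show p * (2 * n) = 2 * p * n by ring]; exact hedvd
    exact (Nat.mul_dvd_mul_iff_left hp).mp h1
  obtain ⟨m, hm⟩ := hd2n
  have h2 : 2 * s * p * n = (p * d) * (m * s) := by
    calc 2 * s * p * n = s * p * (2 * n) := by ring
    _ = s * p * (d * m) := by rw [hm]
    _ = (p * d) * (m * s) := by ring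
  rw [h2, Nat.mul_div_cancel_left _ (Nat.mul_pos hp hd0), hm,
    Nat.mul_div_cancel_left _ hd0]

/-- `N_D(b)` as a character sum over the characters of `ℤ/2pnℤ` of order divisible
by `p`. The sum `∑ᶠ` is the finite sum over the (finite) set of such characters. -/
theorem ND_eq_char_sum (p s n : ℕ) (hp : p.Prime) (hodd : Odd p)
    (hs : 1 ≤ s) (hn : 1 ≤ n) (b : ZMod (2 * p * n)) :
    (ND p s n b : ℂ) =
      (1 / (2 * p * n : ℂ)) *
        ∑ᶠ χ ∈ {χ : AddChar (ZMod (2 * p * n)) ℂ | p ∣ orderOf χ},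
          (χ b)⁻¹ *
            ∏ k ∈ Finset.Icc 1 ((p - 1) / 2),
              (1 - (χ ((k : ℕ) : ZMod (2 * p * n)))⁻¹ ^ (orderOf χ / p)) ^
                (2 * s * p * n / orderOf χ) := by
  classical
  haveI : NeZero (2 * p * n) :=
    ⟨Nat.mul_ne_zero (Nat.mul_ne_zero two_ne_zero hp.pos.ne') (Nat.one_le_iff_ne_zero.mp hn)⟩
  have hsetfin : {χ : AddChar (ZMod (2 * p * n)) ℂ | p ∣ orderOf χ}
      = ↑((Finset.univ : Finset (AddChar (ZMod (2 * p * n)) ℂ)).filter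
          (fun χ => p ∣ orderOf χ)) := by
    ext χ; simp
  rw [hsetfin, finsum_mem_coe_finset]
  rw [ND_eq_signed_sum hp hodd hn b, signed_sum_eq_char_sum hp hn b]
  congr 1
  rw [← Finset.sum_filter_of_ne
    (p := fun χ : AddChar (ZMod (2 * p * n)) ℂ => p ∣ orderOf χ)
    (f := fun χ : AddChar (ZMod (2 * p * n)) ℂ =>
      (χ b)⁻¹ * (∏ x ∈ Dset p n, (1 - χ x)) ^ s)
    (fun χ _ hne => by
      by_contra hnd
      rw [Pchi_zero hp hodd hn χ hnd, zero_pow (by omega : s ≠ 0), mul_zero] at hne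
      exact hne rfl)]
  refine Finset.sum_congr rfl fun χ hχ => ?_
  obtain ⟨-, hdvd⟩ := Finset.mem_filter.mp hχ
  congr 1
  obtain ⟨hζN, hζ0, he, hepos⟩ := zeta_facts hp hn χ
  have heord : orderOf χ ∣ 2 * p * n := by rw [orderOf_addChar]; exact he
  have hepos' : 0 < orderOf χ := by rw [orderOf_addChar]; exact hepos
  rw [Pchi_eq hp hodd hn χ hdvd, ← Finset.prod_pow]
  refine Finset.prod_congr rfl fun k hk => ?_
  rw [← pow_mul]
  congr 1
  exact exp_arith hp.pos hepos' hdvd heord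
end

section
/- Let p be an odd prime and r an integer with 1 ≤ r ≤ p−1. Then ∏_{k=1}^{(p−1)/2} (1 − e^{2πikr/p})^2 = p · e^{πi((p²−1)r/(4p) + (p−1)/2)}. -/
open Finset Complex

lemma gauss_aux (m : ℕ) : 2 * ∑ k ∈ Finset.Ioc 0 m, k = m * (m + 1) := by
  induction m with
  | zero => simp
  | succ n ih => rw [Finset.sum_Ioc_succ_top (Nat.zero_le _), Nat.mul_add, ih]; ring

theorem prod_one_sub_root_of_unity_sq (p : ℕ) (hp : p.Prime) (hodd : Odd p)
    (r : ℤ) (hr1 : 1 ≤ r) (hr2 : r ≤ (p : ℤ) - 1) :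
    ∏ k ∈ Finset.Icc 1 ((p - 1) / 2),
        (1 - Complex.exp (2 * Real.pi * Complex.I * k * r / p)) ^ 2 =
      (p : ℂ) * Complex.exp (Real.pi * Complex.I *
        (((p : ℂ) ^ 2 - 1) * r / (4 * p) + ((p : ℂ) - 1) / 2)) := by
  obtain ⟨m, hm⟩ := hodd
  have hp0 : p ≠ 0 := hp.ne_zero
  have hpC : (p : ℂ) ≠ 0 := Nat.cast_ne_zero.mpr hp0
  have hm2 : (p - 1) / 2 = m := by omega
  set ω : ℂ := Complex.exp (2 * Real.pi * Complex.I * r / p) with hω_def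
  -- ω is a primitive p-th root of unity
  have haZ : ((r.toNat : ℤ)) = r := Int.toNat_of_nonneg (by linarith)
  have haC : ((r.toNat : ℂ)) = (r : ℂ) := by exact_mod_cast congrArg (fun z : ℤ => (z : ℂ)) haZ
  have hω : IsPrimitiveRoot ω p := by
    have h1 : IsPrimitiveRoot (Complex.exp (2 * Real.pi * Complex.I / p)) p :=
      Complex.isPrimitiveRoot_exp p hp0
    have hco : (r.toNat).Coprime p := by
      rw [Nat.coprime_comm]
      refine (Nat.Prime.coprime_iff_not_dvd hp).mpr fun hdvd => ?_
      have h2 : r.toNat ≠ 0 := by omega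
      have := Nat.le_of_dvd (Nat.pos_of_ne_zero h2) hdvd
      omega
    have h3 : ω = (Complex.exp (2 * Real.pi * Complex.I / p)) ^ r.toNat := by
      rw [← Complex.exp_nat_mul, hω_def]
      congr 1
      rw [haC]; ring
    rw [h3]
    exact h1.pow_of_coprime _ hco
  -- full product
  have hfull : ∏ k ∈ Finset.Icc 1 (p - 1), (1 - ω ^ k) = (p : ℂ) := by
    have hω' : IsPrimitiveRoot ω ((p - 1) + 1) := by
      rwa [show (p - 1) + 1 = p by omega]
    have := hω'.prod_one_sub_pow_eq_order
    rw [show Finset.Icc 1 (p-1) = Finset.Ico 1 ((p-1)+1) by rw [Finset.Ico_add_one_right_eq_Icc],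
      Finset.prod_Ico_eq_prod_range]
    simp only [add_tsub_cancel_right] at *
    rw [show ((p : ℂ)) = ((p - 1 : ℕ) : ℂ) + 1 by push_cast [Nat.cast_sub hp.one_le]; ring, ← this]
    exact Finset.prod_congr rfl fun i _ => by rw [add_comm]
  -- split the full product
  have hsplit : (∏ k ∈ Finset.Ioc 0 m, (1 - ω ^ k)) * ∏ k ∈ Finset.Ioc m (2 * m), (1 - ω ^ k)
      = (p : ℂ) := by
    rw [Finset.prod_Ioc_consecutive _ (Nat.zero_le m) (by omega)]
    rw [← hfull, show p - 1 = 2 * m by omega, ← Finset.Icc_add_one_left_eq_Ioc, zero_add]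
  -- reindex the upper half
  have hre : ∏ k ∈ Finset.Ioc m (2 * m), (1 - ω ^ k) = ∏ k ∈ Finset.Ioc 0 m, (1 - ω ^ (p - k)) := by
    refine Finset.prod_bij' (fun k _ => p - k) (fun k _ => p - k) ?_ ?_ ?_ ?_ ?_
    · intro a ha; simp only [Finset.mem_Ioc] at ha ⊢; omega
    · intro a ha; simp only [Finset.mem_Ioc] at ha ⊢; omega
    · intro a ha; simp only [Finset.mem_Ioc] at ha; omega
    · intro a ha; simp only [Finset.mem_Ioc] at ha; omega
    · intro a ha; simp only [Finset.mem_Ioc] at ha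
      congr 2; omega
  have hpair : ∏ k ∈ Finset.Ioc 0 m, ((1 - ω ^ k) * (1 - ω ^ (p - k))) = (p : ℂ) := by
    rw [Finset.prod_mul_distrib, ← hre, hsplit]
  -- rewrite LHS factors
  have hfac : ∀ k ∈ Finset.Ioc 0 m,
      (1 - Complex.exp (2 * Real.pi * Complex.I * k * r / p)) ^ 2
        = (-ω ^ k) * ((1 - ω ^ k) * (1 - ω ^ (p - k))) := by
    intro k hk
    simp only [Finset.mem_Ioc] at hk
    have he : Complex.exp (2 * Real.pi * Complex.I * k * r / p) = ω ^ k := by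
      rw [hω_def, ← Complex.exp_nat_mul]
      congr 1; ring
    have hzw : ω ^ k * ω ^ (p - k) = 1 := by
      rw [← pow_add, show k + (p - k) = p by omega, hω.pow_eq_one]
    rw [he]
    linear_combination (ω ^ k - 1) * hzw
  set S := ∑ k ∈ Finset.Ioc 0 m, k with hS_def
  have hS : 2 * S = m * (m + 1) := gauss_aux m
  calc ∏ k ∈ Finset.Icc 1 ((p - 1) / 2),
        (1 - Complex.exp (2 * Real.pi * Complex.I * k * r / p)) ^ 2
      = ∏ k ∈ Finset.Ioc 0 m, ((-ω ^ k) * ((1 - ω ^ k) * (1 - ω ^ (p - k)))) := by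
        rw [hm2, ← Finset.Icc_add_one_left_eq_Ioc]
        exact Finset.prod_congr rfl hfac
    _ = (∏ k ∈ Finset.Ioc 0 m, (-ω ^ k)) * (p : ℂ) := by
        rw [Finset.prod_mul_distrib, hpair]
    _ = (∏ k ∈ Finset.Ioc 0 m, ((-1) * ω ^ k)) * (p : ℂ) := by
        congr 1
        exact Finset.prod_congr rfl fun k _ => by ring
    _ = ((-1 : ℂ) ^ m * ω ^ S) * (p : ℂ) := by
        rw [Finset.prod_mul_distrib, Finset.prod_const, Nat.card_Ioc, Nat.sub_zero,
          Finset.prod_pow_eq_pow_sum]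
    _ = (p : ℂ) * Complex.exp (Real.pi * Complex.I *
        (((p : ℂ) ^ 2 - 1) * r / (4 * p) + ((p : ℂ) - 1) / 2)) := by
        have hPm : (p : ℂ) = 2 * m + 1 := by exact_mod_cast congrArg (Nat.cast (R := ℂ)) hm
        have hSC : 2 * (S : ℂ) = m * (m + 1) := by exact_mod_cast congrArg (Nat.cast (R := ℂ)) hS
        rw [hω_def, ← Complex.exp_pi_mul_I, ← Complex.exp_nat_mul, ← Complex.exp_nat_mul,
          ← Complex.exp_add]
        rw [show (m : ℂ) * (Real.pi * Complex.I) + S * (2 * Real.pi * Complex.I * r / p)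
            = Real.pi * Complex.I *
              (((p : ℂ) ^ 2 - 1) * r / (4 * p) + ((p : ℂ) - 1) / 2) from ?_]
        · ring
        · rw [hPm]
          have h0 : (2 * (m : ℂ) + 1) ≠ 0 := by rw [← hPm]; exact hpC
          rw [show (4 * (2 * (m : ℂ) + 1)) = (2 * m + 1) * 4 by ring, ← div_div]
          linear_combination (Real.pi * Complex.I * (r : ℂ) / (2 * (m : ℂ) + 1)) * hSC
end
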